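/- arXiv:1607.07468 — 2 statements merged into one kernel-verified Lean document; each statement's English description precedes it below -/
import Mathlib

section
/- Let (M,L) be a concircularly recurrent Finsler manifold of dimension n ≥ 3 with recurrence form A. If ∇^h r − r A ≠ 0, then (M,L) is generalized recurrent: ∇^h R = A ⊗ R + B ⊗ G with B := (1/(n(n−1)))(∇^h r − r A) ≠ 0. -/
/- Abstract setting for the pullback approach to Finsler geometry.
   `F` plays the role of the ring of smooth functions on `TM`,
   `V` the module of π-vector fields.  The structure packages the data of a
   Finsler manifold `(M,L)` with its Cartan connection: the Finsler metric `g`,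
   the h-curvature tensor `R`, the fundamental vector field `eta`, the
   horizontal Ricci tensor `Ric` (trace of `R`), the Ricci operator `Ric0`,
   the horizontal scalar curvature `r`, and the h-covariant derivative
   operators `Dh0, Dh1, Dh2, Dh3` (on scalars, 1-forms, (0,2)-tensors and
   vector-valued (1,3)-tensors, the first argument of the result being the
   direction of differentiation) together with the second-derivative
   operators `Dh1b, Dh2b, Dh3b`.  `invN` and `invn` are the inverses of the
   functions `n(n-1)` and `n`.  The axioms record the standard facts used in
   the paper: Leibniz rules, metricity (∇ʰG = 0), trace compatibilities, and
   the consequences of horizontal integrability (R̂ = 0): the Bianchi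
   identities, pair symmetry, symmetry of Ric, the Ricci identity and the
   vanishing lemma for 2-forms. -/
structure FinslerRec (F : Type*) (V : Type*) [CommRing F] [AddCommGroup V] [Module F V] where
  n : ℕ
  g : V → V → F
  R : V → V → V → V
  eta : V
  Ric : V → V → F
  Ric0 : V → V
  r : F
  invN : F
  invn : F
  Dh0 : F → V → F
  Dh1 : (V → F) → V → V → F
  Dh1b : (V → V → F) → V → V → V → F
  Dh2 : (V → V → F) → V → V → V → F
  Dh2b : (V → V → V → F) → V → V → V → V → F
  Dh3 : (V → V → V → V) → V → V → V → V → V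
  Dh3b : (V → V → V → V → V) → V → V → V → V → V → V
  tr13 : (V → V → V → V) → V → V → F
  tr02 : (V → V → F) → F
  invN_mul : invN * ((n * (n - 1) : ℕ) : F) = 1
  invn_mul : invn * (n : F) = 1
  g_Ric0 : ∀ X Y, g (Ric0 X) Y = Ric X Y
  tr13_R : tr13 R = Ric
  tr13_G : ∀ X Y, tr13 (fun a b c => g a c • b - g b c • a) X Y = ((n : F) - 1) * g X Y
  tr13_add : ∀ T S X Y, tr13 (fun a b c => T a b c + S a b c) X Y = tr13 T X Y + tr13 S X Y
  tr13_smul : ∀ (f : F) T X Y, tr13 (fun a b c => f • T a b c) X Y = f * tr13 T X Y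
  tr13_Dh : ∀ T X Y Z, tr13 (Dh3 T X) Y Z = Dh2 (tr13 T) X Y Z
  tr02_Ric : tr02 Ric = r
  tr02_g : tr02 g = (n : F)
  tr02_add : ∀ ω σ, tr02 (fun a b => ω a b + σ a b) = tr02 ω + tr02 σ
  tr02_smul : ∀ (f : F) ω, tr02 (fun a b => f * ω a b) = f * tr02 ω
  tr02_Dh : ∀ ω X, tr02 (fun a b => Dh2 ω X a b) = Dh0 (tr02 ω) X
  DhG_eq_zero : ∀ X a b c, Dh3 (fun x y z => g x z • y - g y z • x) X a b c = 0
  Dh3_add : ∀ T S X a b c, Dh3 (fun x y z => T x y z + S x y z) X a b c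
      = Dh3 T X a b c + Dh3 S X a b c
  Dh3_smulF : ∀ (f : F) T X a b c, Dh3 (fun x y z => f • T x y z) X a b c
      = Dh0 f X • T a b c + f • Dh3 T X a b c
  Dh3b_add : ∀ P Q X Y a b c, Dh3b (fun x y z w => P x y z w + Q x y z w) X Y a b c
      = Dh3b P X Y a b c + Dh3b Q X Y a b c
  Dh3b_tens : ∀ (A : V → F) T X Y a b c, Dh3b (fun x y z w => A x • T y z w) X Y a b c
      = Dh1 A X Y • T a b c + A Y • Dh3 T X a b c
  Dh2b_add : ∀ P Q X Y a b, Dh2b (fun x y z => P x y z + Q x y z) X Y a b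
      = Dh2b P X Y a b + Dh2b Q X Y a b
  Dh2b_tens : ∀ (A : V → F) (ω : V → V → F) X Y a b, Dh2b (fun x y z => A x * ω y z) X Y a b
      = Dh1 A X Y * ω a b + A Y * Dh2 ω X a b
  bianchi1 : (∀ X Y, R X Y eta = 0) → ∀ X Y Z, R X Y Z + R Y Z X + R Z X Y = 0
  pair_sym : (∀ X Y, R X Y eta = 0) → ∀ X Y Z W, g (R X Y Z) W = g (R Z W X) Y
  bianchi2 : (∀ X Y, R X Y eta = 0) → ∀ X Y Z W,
      Dh3 R X Y Z W + Dh3 R Y Z X W + Dh3 R Z X Y W = 0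
  ric_symm : (∀ X Y, R X Y eta = 0) → ∀ X Y, Ric X Y = Ric Y X
  ricci_id1 : (∀ X Y, R X Y eta = 0) → ∀ (A : V → F) X Y Z,
      Dh1b (Dh1 A) Y X Z - Dh1b (Dh1 A) X Y Z = - A (R X Y Z)
  vanish_R : (∀ X Y, R X Y eta = 0) → ∀ ω : V → V → F,
      (∀ u v w x y z, ω u v * g (R w x y) z + ω w x * g (R y z u) v
        + ω y z * g (R u v w) x = 0) → ∀ X Y, ω X Y = 0
  vanish_G : (∀ X Y, R X Y eta = 0) → ∀ ω : V → V → F,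
      (∀ u v w x y z, ω u v * g (g w y • x - g x y • w) z
        + ω w x * g (g y u • z - g z u • y) v
        + ω y z * g (g u w • v - g v w • u) x = 0) → ∀ X Y, ω X Y = 0

namespace FinslerRec

variable {F : Type*} {V : Type*} [CommRing F] [AddCommGroup V] [Module F V] (S : FinslerRec F V)

/-- The tensor `G(X,Y)Z = g(X,Z)Y - g(Y,Z)X`. -/
def G : V → V → V → V := fun X Y Z => S.g X Z • Y - S.g Y Z • X

/-- The concircular curvature tensor `C = R - (r/(n(n-1))) G`. -/
def C : V → V → V → V := fun X Y Z => S.R X Y Z - (S.invN * S.r) • S.G X Y Z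

/-- The (0,4) curvature tensor `𝐑(X,Y,Z,W) = g(R(X,Y)Z, W)`. -/
def bR : V → V → V → V → F := fun X Y Z W => S.g (S.R X Y Z) W

/-- The (0,4) concircular tensor `𝐂(X,Y,Z,W) = g(C(X,Y)Z, W)`. -/
def bC : V → V → V → V → F := fun X Y Z W => S.g (S.C X Y Z) W

/-- The action of the curvature operator `R(X,Y)` as a derivation on (0,4)-tensors. -/
def Rdot (X Y : V) (T : V → V → V → V → F) : V → V → V → V → F :=
  fun Z W U P => -(T (S.R X Y Z) W U P) - T Z (S.R X Y W) U P
    - T Z W (S.R X Y U) P - T Z W U (S.R X Y P)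

/-- Horizontal integrability: the (v)h-torsion `R̂(X,Y) = R(X,Y)η̄` vanishes. -/
def HorizontallyIntegrable : Prop := ∀ X Y, S.R X Y S.eta = 0

/-- Recurrent: `∇ʰR = A ⊗ R` with `A` a non-zero 1-form. -/
def Recurrent (A : V → F) : Prop :=
  A ≠ 0 ∧ ∀ X Z W U, S.Dh3 S.R X Z W U = A X • S.R Z W U

/-- 2-recurrent: `∇ʰ∇ʰR = α ⊗ R` with `α` a non-zero 2-form. -/
def TwoRecurrent (α : V → V → F) : Prop :=
  α ≠ 0 ∧ ∀ X Y Z W U, S.Dh3b (S.Dh3 S.R) X Y Z W U = α X Y • S.R Z W U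

/-- Generalized recurrent: `∇ʰR = A ⊗ R + B ⊗ G`, `A, B` non-zero 1-forms. -/
def GenRecurrent (A B : V → F) : Prop :=
  A ≠ 0 ∧ B ≠ 0 ∧ ∀ X Z W U, S.Dh3 S.R X Z W U = A X • S.R Z W U + B X • S.G Z W U

/-- Generalized 2-recurrent: `∇ʰ∇ʰR = α ⊗ R + μ ⊗ G`, `α, μ` non-zero 2-forms. -/
def Gen2Recurrent (α μ : V → V → F) : Prop :=
  α ≠ 0 ∧ μ ≠ 0 ∧ ∀ X Y Z W U,
    S.Dh3b (S.Dh3 S.R) X Y Z W U = α X Y • S.R Z W U + μ X Y • S.G Z W U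

/-- Ricci recurrent: `∇ʰRic = A ⊗ Ric`, `A` a non-zero 1-form. -/
def RicciRecurrent (A : V → F) : Prop :=
  A ≠ 0 ∧ ∀ X Y Z, S.Dh2 S.Ric X Y Z = A X * S.Ric Y Z

/-- 2-Ricci recurrent: `∇ʰ∇ʰRic = α ⊗ Ric`, `α` a non-zero 2-form. -/
def TwoRicciRecurrent (α : V → V → F) : Prop :=
  α ≠ 0 ∧ ∀ X Y Z W, S.Dh2b (S.Dh2 S.Ric) X Y Z W = α X Y * S.Ric Z W

/-- Generalized Ricci recurrent: `∇ʰRic = A ⊗ Ric + B ⊗ g`. -/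
def GenRicciRecurrent (A B : V → F) : Prop :=
  A ≠ 0 ∧ B ≠ 0 ∧ ∀ X Y Z, S.Dh2 S.Ric X Y Z = A X * S.Ric Y Z + B X * S.g Y Z

/-- Concircularly recurrent: `∇ʰC = A ⊗ C`, `A` a non-zero 1-form. -/
def ConcRecurrent (A : V → F) : Prop :=
  A ≠ 0 ∧ ∀ X Z W U, S.Dh3 S.C X Z W U = A X • S.C Z W U

/-- 2-concircularly recurrent: `∇ʰ∇ʰC = α ⊗ C`, `α` a non-zero 2-form. -/
def TwoConcRecurrent (α : V → V → F) : Prop :=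
  α ≠ 0 ∧ ∀ X Y Z W U, S.Dh3b (S.Dh3 S.C) X Y Z W U = α X Y • S.C Z W U

/-- Generalized concircularly recurrent: `∇ʰC = A ⊗ C + B ⊗ G`. -/
def GenConcRecurrent (A B : V → F) : Prop :=
  A ≠ 0 ∧ B ≠ 0 ∧ ∀ X Z W U, S.Dh3 S.C X Z W U = A X • S.C Z W U + B X • S.G Z W U

/-- Generalized 2-concircularly recurrent: `∇ʰ∇ʰC = α ⊗ C + μ ⊗ G`. -/
def Gen2ConcRecurrent (α μ : V → V → F) : Prop :=
  α ≠ 0 ∧ μ ≠ 0 ∧ ∀ X Y Z W U,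
    S.Dh3b (S.Dh3 S.C) X Y Z W U = α X Y • S.C Z W U + μ X Y • S.G Z W U

end FinslerRec

/- Since `∇ʰG = 0`, differentiating `R = C + f G` with `f = r/(n(n-1))` turns
`∇ʰC = A ⊗ C` into `∇ʰR = A ⊗ R + B ⊗ G` with `B = ∇ʰf − f A`. Contracting this
identity twice gives `∇ʰr = r A + n(n-1) B`, which identifies `B` as
`(∇ʰr − r A)/(n(n-1))`. -/

theorem Nat.cast_mul_sub_one {R : Type*} [Ring R] (n : ℕ) :
    ((n * (n - 1) : ℕ) : R) = n * (n - 1) := by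
  cases n <;> simp

namespace FinslerRec

variable {F : Type*} {V : Type*} [CommRing F] [AddCommGroup V] [Module F V] (S : FinslerRec F V)

theorem isUnit_invN : IsUnit S.invN :=
  .of_mul_eq_one _ S.invN_mul

theorem invN_mul_eq_one : S.invN * ((S.n : F) * (S.n - 1)) = 1 := by
  rw [← Nat.cast_mul_sub_one]
  exact S.invN_mul

theorem R_eq_C_add_smul_G (X Y Z : V) : S.R X Y Z = S.C X Y Z + (S.invN * S.r) • S.G X Y Z := by
  simp [C]

theorem Dh3_add_smul_G (T : V → V → V → V) (f : F) (X a b c : V) :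
    S.Dh3 (fun x y z => T x y z + f • S.G x y z) X a b c
      = S.Dh3 T X a b c + S.Dh0 f X • S.G a b c := by
  have hG : S.Dh3 S.G X a b c = 0 := S.DhG_eq_zero X a b c
  rw [S.Dh3_add, S.Dh3_smulF, hG, smul_zero, add_zero]

variable {S}

theorem Dh3_R_of_Dh3_C {A : V → F} (hC : ∀ X Z W U, S.Dh3 S.C X Z W U = A X • S.C Z W U)
    (X Z W U : V) :
    S.Dh3 S.R X Z W U = A X • S.R Z W U
      + (S.Dh0 (S.invN * S.r) X - A X * (S.invN * S.r)) • S.G Z W U := by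
  have hR : S.R = fun x y z => S.C x y z + (S.invN * S.r) • S.G x y z :=
    funext fun x => funext fun y => funext (S.R_eq_C_add_smul_G x y)
  rw [hR, S.Dh3_add_smul_G, hC]
  module

theorem Dh2_Ric_of_Dh3_R {X : V} {a b : F}
    (h : ∀ Z W U, S.Dh3 S.R X Z W U = a • S.R Z W U + b • S.G Z W U) (Y Z : V) :
    S.Dh2 S.Ric X Y Z = a * S.Ric Y Z + b * ((S.n : F) - 1) * S.g Y Z := by
  have hDR : S.Dh3 S.R X = fun Z W U => a • S.R Z W U + b • S.G Z W U :=
    funext fun Z => funext fun W => funext (h Z W)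
  conv_lhs => rw [← S.tr13_R]
  rw [← S.tr13_Dh, hDR, S.tr13_add, S.tr13_smul, S.tr13_smul, S.tr13_R,
    show S.tr13 S.G Y Z = _ from S.tr13_G Y Z]
  ring

theorem Dh0_r_of_Dh2_Ric {X : V} {a b : F}
    (h : ∀ Y Z, S.Dh2 S.Ric X Y Z = a * S.Ric Y Z + b * S.g Y Z) :
    S.Dh0 S.r X = a * S.r + b * S.n := by
  have hDRic : (fun Y Z => S.Dh2 S.Ric X Y Z) = fun Y Z => a * S.Ric Y Z + b * S.g Y Z :=
    funext fun Y => funext (h Y)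
  conv_lhs => rw [← S.tr02_Ric]
  rw [← S.tr02_Dh, hDRic, S.tr02_add, S.tr02_smul, S.tr02_smul, S.tr02_Ric, S.tr02_g]

theorem invN_mul_Dh0_r_sub_of_Dh3_R {X : V} {a b : F}
    (h : ∀ Z W U, S.Dh3 S.R X Z W U = a • S.R Z W U + b • S.G Z W U) :
    S.invN * (S.Dh0 S.r X - S.r * a) = b := by
  rw [Dh0_r_of_Dh2_Ric (Dh2_Ric_of_Dh3_R h)]
  linear_combination b * S.invN_mul_eq_one

end FinslerRec

theorem concRecurrent_is_genRecurrent_general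
    {F : Type*} {V : Type*} [CommRing F] [AddCommGroup V] [Module F V]
    (S : FinslerRec F V) (A : V → F)
    (hrec : S.ConcRecurrent A)
    (hB : (fun X => S.Dh0 S.r X - S.r * A X) ≠ 0) :
    S.GenRecurrent A (fun X => S.invN * (S.Dh0 S.r X - S.r * A X)) := by
  obtain ⟨hA, hC⟩ := hrec
  have hR := FinslerRec.Dh3_R_of_Dh3_C hC
  refine ⟨hA, fun hB0 => hB (funext fun X => ?_), fun X Z W U => ?_⟩
  · exact S.isUnit_invN.mul_right_eq_zero.1 (congrFun hB0 X)
  · dsimp only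
    rw [hR, FinslerRec.invN_mul_Dh0_r_sub_of_Dh3_R (hR X)]

/-- Theorem 4.2(b): a concircularly recurrent Finsler manifold of dimension
`n ≥ 3` with recurrence form `A` such that `∇ʰr − rA ≠ 0` is generalized
recurrent with recurrence forms `A` and `B = (1/(n(n-1)))(∇ʰr − rA)`. -/
theorem concRecurrent_is_genRecurrent
    {F : Type*} {V : Type*} [CommRing F] [AddCommGroup V] [Module F V]
    (S : FinslerRec F V) (hn : 3 ≤ S.n) (A : V → F)
    (hrec : S.ConcRecurrent A)
    (hB : (fun X => S.Dh0 S.r X - S.r * A X) ≠ 0) :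
    S.GenRecurrent A (fun X => S.invN * (S.Dh0 S.r X - S.r * A X)) :=
  concRecurrent_is_genRecurrent_general S A hrec hB
end

section
/- If (M,L) is a generalized recurrent Finsler manifold of dimension n ≥ 3 with recurrence forms A, B, non-zero scalar curvature r, and with ∇^h A + A ⊗ A ≠ 0, then (M,L) is 2-concircularly recurrent: ∇^h ∇^h C = (∇^h A + A ⊗ A) ⊗ C. -/
/-! Differentiating `C = R - (r / n(n-1)) G` with `∇ʰG = 0` shows that the `B ⊗ G` term of
`∇ʰR` is exactly cancelled by the `B`-part of `∇ʰr = r A + n(n-1) B`, obtained by tracing twice;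
so `∇ʰC = A ⊗ C`, and differentiating once more with the Leibniz rule gives
`∇ʰ∇ʰC = (∇ʰA + A ⊗ A) ⊗ C`. -/

namespace FinslerRec

variable {F : Type*} {V : Type*} [CommRing F] [AddCommGroup V] [Module F V] (S : FinslerRec F V)

/- The axioms only describe `Dh0 f X` through its action on vectors (via the Leibniz rule for
`Dh3` on constant tensors), so its derivation properties are stated after `• v`. -/

lemma dh0_add_smul (f f' : F) (X v : V) :
    S.Dh0 (f + f') X • v = S.Dh0 f X • v + S.Dh0 f' X • v := by
  have h := S.Dh3_smulF (f + f') (fun _ _ _ => v) X 0 0 0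
  have hsplit : (fun _ _ _ : V => (f + f') • v) = fun _ _ _ => f • v + f' • v := by
    funext; rw [add_smul]
  rw [hsplit, S.Dh3_add, S.Dh3_smulF, S.Dh3_smulF] at h
  linear_combination (norm := module) -h

lemma dh0_mul_smul (c f : F) (X v : V) :
    S.Dh0 (c * f) X • v = S.Dh0 c X • f • v + c • S.Dh0 f X • v := by
  have h := S.Dh3_smulF (c * f) (fun _ _ _ => v) X 0 0 0
  have hsplit : (fun _ _ _ : V => (c * f) • v) = fun _ _ _ => c • f • v := by
    funext; rw [mul_smul]
  rw [hsplit, S.Dh3_smulF, S.Dh3_smulF] at h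
  linear_combination (norm := module) -h

lemma dh0_zero_smul (X v : V) : S.Dh0 0 X • v = 0 := by
  simpa using S.dh0_add_smul 0 0 X v

lemma dh0_one_smul (X v : V) : S.Dh0 1 X • v = 0 := by
  simpa using S.dh0_mul_smul 1 1 X v

lemma dh0_natCast_smul (k : ℕ) (X v : V) : S.Dh0 (k : F) X • v = 0 := by
  induction k with
  | zero => simpa using S.dh0_zero_smul X v
  | succ k ih => rw [Nat.cast_succ, dh0_add_smul, ih, dh0_one_smul, add_zero]

lemma dh0_neg_smul (f : F) (X v : V) : S.Dh0 (-f) X • v = -(S.Dh0 f X • v) := by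
  have h := S.dh0_add_smul f (-f) X v
  rw [add_neg_cancel, dh0_zero_smul] at h
  exact (neg_eq_of_add_eq_zero_right h.symm).symm

lemma dh0_invN_smul (X v : V) : S.Dh0 S.invN X • v = 0 := by
  obtain ⟨N, hinv, hN⟩ : ∃ N : F, S.invN * N = 1 ∧ ∀ w : V, S.Dh0 N X • w = 0 :=
    ⟨_, S.invN_mul, S.dh0_natCast_smul _ X⟩
  have hmul := S.dh0_mul_smul S.invN N X (S.invN • v)
  rwa [hinv, dh0_one_smul, hN, smul_zero, add_zero, smul_smul N, mul_comm N, hinv, one_smul,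
    eq_comm] at hmul

lemma invN_mul_n_mul_n_sub_one : S.invN * ((S.n : F) * ((S.n : F) - 1)) = 1 := by
  rcases Nat.eq_zero_or_pos S.n with hn | hn
  · simpa [hn] using S.invN_mul
  · simpa [Nat.cast_sub hn] using S.invN_mul

section

variable {A B : V → F}

lemma dh2_Ric_of_dh3_R (hR : ∀ X Z W U, S.Dh3 S.R X Z W U = A X • S.R Z W U + B X • S.G Z W U)
    (X Y Z : V) : S.Dh2 S.Ric X Y Z = A X * S.Ric Y Z + (((S.n : F) - 1) * B X) * S.g Y Z := by
  have hDR : S.Dh3 S.R X = fun a b c => A X • S.R a b c + B X • (S.g a c • b - S.g b c • a) := by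
    funext a b c; exact hR X a b c
  have h := S.tr13_Dh S.R X Y Z
  rw [hDR, S.tr13_add, S.tr13_smul, S.tr13_smul, S.tr13_R, S.tr13_G] at h
  linear_combination -h

lemma dh0_r_of_dh2_Ric (hRic : ∀ X Y Z, S.Dh2 S.Ric X Y Z = A X * S.Ric Y Z + B X * S.g Y Z)
    (X : V) : S.Dh0 S.r X = S.r * A X + (S.n : F) * B X := by
  have hDRic : (fun a b => S.Dh2 S.Ric X a b) = fun a b => A X * S.Ric a b + B X * S.g a b := by
    funext a b; exact hRic X a b
  have h := S.tr02_Dh S.Ric X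
  rw [hDRic, S.tr02_add, S.tr02_smul, S.tr02_smul, S.tr02_Ric, S.tr02_g] at h
  linear_combination -h

lemma dh3_C_of_dh3_R (hR : ∀ X Z W U, S.Dh3 S.R X Z W U = A X • S.R Z W U + B X • S.G Z W U)
    (X a b c : V) : S.Dh3 S.C X a b c = A X • S.C a b c := by
  have hC : S.C = fun x y z => S.R x y z + (-(S.invN * S.r)) • (S.g x z • y - S.g y z • x) := by
    funext x y z
    simp only [C, G, neg_smul, sub_eq_add_neg]
  have hDcoeff : ∀ w : V,
      S.Dh0 (-(S.invN * S.r)) X • w = (-(S.invN * S.r * A X) - B X) • w := fun w => by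
    rw [dh0_neg_smul, dh0_mul_smul, dh0_invN_smul, zero_add,
      S.dh0_r_of_dh2_Ric (S.dh2_Ric_of_dh3_R hR)]
    match_scalars
    linear_combination (-(B X)) * S.invN_mul_n_mul_n_sub_one
  rw [hC, S.Dh3_add, S.Dh3_smulF, S.DhG_eq_zero, hR, hDcoeff]
  simp only [G]
  match_scalars <;> ring

theorem GenRecurrent.concRecurrent (h : S.GenRecurrent A B) : S.ConcRecurrent A :=
  ⟨h.1, S.dh3_C_of_dh3_R h.2.2⟩

end

lemma dh3b_dh3_of_recurrent {A : V → F} {T : V → V → V → V}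
    (hT : ∀ X a b c, S.Dh3 T X a b c = A X • T a b c) (X Y a b c : V) :
    S.Dh3b (S.Dh3 T) X Y a b c = (S.Dh1 A X Y + A X * A Y) • T a b c := by
  have hDT : S.Dh3 T = fun X a b c => A X • T a b c := by
    funext X a b c; exact hT X a b c
  rw [hDT, S.Dh3b_tens, hT, smul_smul, ← add_smul, mul_comm (A Y)]

end FinslerRec

theorem genRecurrent_is_twoConcRecurrent_general
    {F : Type*} {V : Type*} [CommRing F] [AddCommGroup V] [Module F V]
    (S : FinslerRec F V) (A B : V → F)
    (hrec : S.GenRecurrent A B)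
    (hα : (fun X Y => S.Dh1 A X Y + A X * A Y) ≠ 0) :
    S.TwoConcRecurrent (fun X Y => S.Dh1 A X Y + A X * A Y) :=
  ⟨hα, S.dh3b_dh3_of_recurrent hrec.concRecurrent.2⟩

/-- Theorem 5.1(c): a generalized recurrent Finsler manifold of dimension
`n ≥ 3` with recurrence forms `A, B`, non-zero scalar curvature `r`, and
`∇ʰA + A ⊗ A ≠ 0` is 2-concircularly recurrent with 2-form `∇ʰA + A ⊗ A`. -/
theorem genRecurrent_is_twoConcRecurrent
    {F : Type*} {V : Type*} [CommRing F] [AddCommGroup V] [Module F V]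
    (S : FinslerRec F V) (hn : 3 ≤ S.n) (A B : V → F)
    (hrec : S.GenRecurrent A B) (hr : S.r ≠ 0)
    (hα : (fun X Y => S.Dh1 A X Y + A X * A Y) ≠ 0) :
    S.TwoConcRecurrent (fun X Y => S.Dh1 A X Y + A X * A Y) :=
  genRecurrent_is_twoConcRecurrent_general S A B hrec hα
end
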